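/- arXiv:1206.1016 — 3 statements merged into one kernel-verified Lean document; each statement's English description precedes it below -/
import Mathlib

section
/- There is a constant K such that for any p = p(n) ∈ (0,1), with high probability the random graph G = G(n,p) satisfies: for every real κ > K p^{-1} log n and all disjoint nonempty vertex subsets S, T with |S| ≤ min{κ, |T|}, one has |∇(S,T)| ≤ 2|T|κp and |G[S]| ≤ |S|κp. -/
open Filter

/-- The number of edges of a graph. -/
noncomputable def edgeCount {V : Type*} (G : SimpleGraph V) : ℕ := G.edgeSet.ncard

open Classical in
/-- The probability, in the Erdős–Rényi model `G(n,p)`, of the set of graphs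
satisfying the property `P`. -/
noncomputable def erProb (n : ℕ) (p : ℝ) (P : SimpleGraph (Fin n) → Prop) : ℝ :=
  ∑ G : SimpleGraph (Fin n),
    if P G then p ^ edgeCount G * (1 - p) ^ (n.choose 2 - edgeCount G) else 0

/-- `∇(S,T)`: the number of edges of `G` with one endpoint in `S` and one in `T`
(for disjoint `S`, `T`). -/
noncomputable def nablaCount {V : Type*} (G : SimpleGraph V) (S T : Set V) : ℕ :=
  {e ∈ G.edgeSet | ∃ a ∈ S, ∃ b ∈ T, e = s(a, b)}.ncard

/-- `|G[S]|`: the number of edges of `G` with both endpoints in `S`. -/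
noncomputable def edgesInside {V : Type*} (G : SimpleGraph V) (S : Set V) : ℕ :=
  {e ∈ G.edgeSet | ∀ v ∈ e, v ∈ S}.ncard

/-- `d_S(x)`: the number of neighbors of `x` in `G` lying in `S`. -/
noncomputable def degIn {V : Type*} (G : SimpleGraph V) (S : Set V) (x : V) : ℕ :=
  (G.neighborSet x ∩ S).ncard

/-- `d_S(x,y)`: the number of common neighbors of `x` and `y` in `G` lying in `S`. -/
noncomputable def codegIn {V : Type*} (G : SimpleGraph V) (S : Set V) (x y : V) : ℕ :=
  (G.neighborSet x ∩ G.neighborSet y ∩ S).ncard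

/-- A cut `(A, Aᶜ)` of the vertex set `Fin n` is balanced if `|A| = (1 ± η) n/2`. -/
def balancedCut (n : ℕ) (η : ℝ) (A : Set (Fin n)) : Prop :=
  (1 - η) * n / 2 ≤ (A.ncard : ℝ) ∧ (A.ncard : ℝ) ≤ (1 + η) * n / 2

/-- `X(Π) = {x ∈ A : d_B(x) < (1-2ε)np/4}` for the cut `Π = (A, Aᶜ)`. -/
noncomputable def cutX {n : ℕ} (G : SimpleGraph (Fin n)) (ε p : ℝ) (A : Set (Fin n)) :
    Set (Fin n) :=
  {x ∈ A | (degIn G Aᶜ x : ℝ) < (1 - 2 * ε) * n * p / 4}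

/-- `T(Π) = {x ∈ A : d_B(x) < (1-ε)np/2}` for the cut `Π = (A, Aᶜ)`. -/
noncomputable def cutT {n : ℕ} (G : SimpleGraph (Fin n)) (ε p : ℝ) (A : Set (Fin n)) :
    Set (Fin n) :=
  {x ∈ A | (degIn G Aᶜ x : ℝ) < (1 - ε) * n * p / 2}

/-- `Q(Π)` (with `α = 0.8`): the pairs `{x,y} ⊆ A` which either meet `X(Π)` or have
abnormally small co-degree `d_B(x,y)` into `B = Aᶜ`. -/
noncomputable def cutQ {n : ℕ} (G : SimpleGraph (Fin n)) (ε p : ℝ) (A : Set (Fin n)) :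
    Set (Sym2 (Fin n)) :=
  {e | ∃ x y : Fin n, x ≠ y ∧ e = s(x, y) ∧ x ∈ A ∧ y ∈ A ∧
    (x ∈ cutX G ε p A ∨ y ∈ cutX G ε p A ∨
     (x ∉ cutT G ε p A ∧ y ∉ cutT G ε p A ∧ (codegIn G Aᶜ x y : ℝ) < 0.8 * n * p ^ 2 / 2) ∨
     ((x ∈ cutT G ε p A ↔ y ∉ cutT G ε p A) ∧ (codegIn G Aᶜ x y : ℝ) < 0.8 * n * p ^ 2 / 4) ∨
     (x ∈ cutT G ε p A ∧ y ∈ cutT G ε p A ∧ (codegIn G Aᶜ x y : ℝ) < 0.8 * n * p ^ 2 / 8))}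

/-- `Q_v(Π)`: the pairs in `Q(Π)` meeting `X(Π)`. -/
noncomputable def cutQv {n : ℕ} (G : SimpleGraph (Fin n)) (ε p : ℝ) (A : Set (Fin n)) :
    Set (Sym2 (Fin n)) :=
  {e ∈ cutQ G ε p A | ∃ x ∈ cutX G ε p A, x ∈ e}

/-- `Q_e(Π) = Q(Π) ∖ Q_v(Π)`. -/
noncomputable def cutQe {n : ℕ} (G : SimpleGraph (Fin n)) (ε p : ℝ) (A : Set (Fin n)) :
    Set (Sym2 (Fin n)) :=
  cutQ G ε p A \ cutQv G ε p A

/-- `b(G)`: the maximum number of edges of a bipartite subgraph of `G`. -/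
noncomputable def maxBip {V : Type*} (G : SimpleGraph V) : ℕ :=
  sSup {m | ∃ F : SimpleGraph V, F ≤ G ∧ F.Colorable 2 ∧ edgeCount F = m}

/-- `t(G)`: the maximum number of edges of a triangle-free subgraph of `G`. -/
noncomputable def maxTriFree {V : Type*} (G : SimpleGraph V) : ℕ :=
  sSup {m | ∃ F : SimpleGraph V, F ≤ G ∧ F.CliqueFree 3 ∧ edgeCount F = m}

/-- The set of edges of `G` crossing the cut `(A, Aᶜ)`. -/
def cutEdgeSet {V : Type*} (G : SimpleGraph V) (A : Set V) : Set (Sym2 V) :=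
  {e ∈ G.edgeSet | ∃ a ∈ A, ∃ b ∈ Aᶜ, e = s(a, b)}

/-!
Take `K = 16` and the threshold `M(s) = max (s p) (16 log n)`. As `|S| ≤ κ` and
`κ p > 16 log n`, we have `M(|S|) ≤ κ p`, so it suffices that w.h.p.
`|∇(S,T)| ≤ 2 |T| M(|S|)` for all nonempty `S, T` with `|S| ≤ |T|`, and
`|G[S]| ≤ |S| M(|S|)` for all nonempty `S`. Both counts are binomial, over at most `|S| |T|`
resp. `|S|² / 2` pairs, so their means are at most half of the targets, and the Chernoff bound
`P(X > b) ≤ exp ((e - 1) E X - b)` makes the failure probabilities at most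
`n ^ (-2 (|S| + |T|))` resp. `n ^ (-2 |S|)`. Summing over all `S, T` gives at most `u² + u`
with `u = (1 + n⁻²) ^ n - 1 → 0`.
-/

open Finset

theorem Finset.sum_powerset_pow_mul_pow_card_inter {α R : Type*} [DecidableEq α] [CommRing R]
    (U C : Finset α) (p x : R) :
    ∑ s ∈ U.powerset, p ^ #s * (1 - p) ^ (#U - #s) * x ^ #(s ∩ C) =
      (1 - p + p * x) ^ #(U ∩ C) := by
  have h := prod_add (fun i => p * if i ∈ C then x else 1) (fun _ => 1 - p) U
  rw [prod_congr rfl fun i _ => (by split_ifs <;> ring :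
      p * (if i ∈ C then x else 1) + (1 - p) = if i ∈ C then 1 - p + p * x else 1),
    prod_ite_mem, prod_const] at h
  rw [h]
  refine sum_congr rfl fun s hs => ?_
  rw [prod_mul_distrib, prod_const, prod_ite_mem, prod_const, prod_const,
    card_sdiff_of_subset (mem_powerset.1 hs)]
  ring

theorem sum_erase_empty_pow_ncard {V : Type*} [Fintype V] (x : ℝ) :
    ∑ S ∈ univ.erase (∅ : Set V), x ^ S.ncard = (1 + x) ^ Fintype.card V - 1 := by
  classical
  rw [sum_erase_eq_sub (mem_univ _), Set.ncard_empty, pow_zero,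
    ← Fintype.sum_equiv (Fintype.finsetEquivSet (α := V)) (fun s => x ^ #s) _
      fun s => by rw [Fintype.finsetEquivSet_apply, Set.ncard_coe_finset],
    add_comm 1 x, ← Fintype.sum_pow_mul_eq_add_pow V x 1]
  simp

theorem tendsto_one_add_pow_sub_one {x : ℕ → ℝ} (hx0 : ∀ n, 0 ≤ x n)
    (hx : Tendsto (fun n => n * x n) atTop (nhds 0)) :
    Tendsto (fun n => (1 + x n) ^ n - 1) atTop (nhds 0) := by
  have hexp : Tendsto (fun n => Real.exp (n * x n) - 1) atTop (nhds 0) := by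
    simpa using ((Real.continuous_exp.tendsto 0).comp hx).sub_const 1
  refine squeeze_zero (fun n => sub_nonneg.2 (one_le_pow₀ (by linarith [hx0 n])))
    (fun n => ?_) hexp
  rw [Real.exp_nat_mul]
  gcongr
  · linarith [hx0 n]
  · linarith [Real.add_one_le_exp (x n)]

theorem tendsto_natCast_mul_exp_neg_two_mul_log :
    Tendsto (fun n : ℕ => n * Real.exp (-(2 * Real.log n))) atTop (nhds 0) := by
  refine (tendsto_inv_atTop_nhds_zero_nat (𝕜 := ℝ)).congr' ?_
  filter_upwards [eventually_gt_atTop 0] with n hn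
  have hn : (0 : ℝ) < n := Nat.cast_pos.2 hn
  rw [Real.exp_neg, ← Real.log_rpow hn, Real.exp_log (by positivity), Real.rpow_two]
  field_simp

open Classical in
theorem edgeCount_eq_card_edgeFinset {V : Type*} [Fintype V] (G : SimpleGraph V) :
    edgeCount G = #G.edgeFinset := by
  rw [edgeCount, ← Set.ncard_coe_finset, SimpleGraph.coe_edgeFinset]

section Counting

variable {V : Type*} [Fintype V] [DecidableEq V]

open Classical in
theorem SimpleGraph.sum_edgeFinset_eq_sum_powerset {R : Type*} [AddCommMonoid R]
    (f : Finset (Sym2 V) → R) :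
    ∑ G : SimpleGraph V, f G.edgeFinset =
      ∑ s ∈ (⊤ : SimpleGraph V).edgeFinset.powerset, f s := by
  refine sum_bij' (fun G _ => G.edgeFinset) (fun s _ => SimpleGraph.fromEdgeSet s)
    (fun G _ => mem_powerset.2 (SimpleGraph.edgeFinset_mono le_top)) (fun _ _ => mem_univ _)
    (fun G _ => by simp) (fun s hs => ?_) (fun _ _ => rfl)
  ext e
  simp only [SimpleGraph.mem_edgeFinset, SimpleGraph.edgeSet_fromEdgeSet, Set.mem_sdiff,
    mem_coe, and_iff_left_iff_imp]
  exact fun he => SimpleGraph.not_isDiag_of_mem_edgeFinset (mem_powerset.1 hs he)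

open Classical in
theorem nablaCount_eq_card_inter (G : SimpleGraph V) (S T : Set V) :
    nablaCount G S T = #(G.edgeFinset ∩ image₂ Sym2.mk S.toFinset T.toFinset) := by
  rw [nablaCount, ← Set.ncard_coe_finset]
  congr 1
  ext e
  simp only [Set.mem_ofPred_eq, coe_inter, Set.mem_inter_iff, mem_coe,
    SimpleGraph.mem_edgeFinset, mem_image₂, Set.mem_toFinset, eq_comm]

open Classical in
theorem edgesInside_eq_card_inter (G : SimpleGraph V) (S : Set V) :
    edgesInside G S = #(G.edgeFinset ∩ S.toFinset.sym2) := by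
  rw [edgesInside, ← Set.ncard_coe_finset]
  congr 1
  ext e
  simp only [Set.mem_ofPred_eq, coe_inter, Set.mem_inter_iff, mem_coe,
    SimpleGraph.mem_edgeFinset, mem_sym2_iff, Set.mem_toFinset]

open Classical in
theorem card_edgeFinset_top_inter_sym2_le (S : Set V) :
    #((⊤ : SimpleGraph V).edgeFinset ∩ S.toFinset.sym2) ≤ S.ncard.choose 2 := by
  rw [← SimpleGraph.map_edgeFinset_induce, card_map, ← Nat.card_coe_set_eq,
    Nat.card_eq_fintype_card]
  exact SimpleGraph.card_edgeFinset_le_card_choose_two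

end Counting

noncomputable def erWeight (n : ℕ) (p : ℝ) (G : SimpleGraph (Fin n)) : ℝ :=
  p ^ edgeCount G * (1 - p) ^ (n.choose 2 - edgeCount G)

theorem erWeight_nonneg {n : ℕ} {p : ℝ} (hp0 : 0 ≤ p) (hp1 : p ≤ 1)
    (G : SimpleGraph (Fin n)) : 0 ≤ erWeight n p G :=
  mul_nonneg (pow_nonneg hp0 _) (pow_nonneg (sub_nonneg.2 hp1) _)

open Classical in
theorem sum_erWeight_mul_pow (n : ℕ) (p x : ℝ) (C : Finset (Sym2 (Fin n))) :
    ∑ G, erWeight n p G * x ^ #(G.edgeFinset ∩ C) =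
      (1 - p + p * x) ^ #((⊤ : SimpleGraph (Fin n)).edgeFinset ∩ C) := by
  simp only [erWeight, edgeCount_eq_card_edgeFinset]
  rw [SimpleGraph.sum_edgeFinset_eq_sum_powerset
      (fun s => p ^ #s * (1 - p) ^ (n.choose 2 - #s) * x ^ #(s ∩ C)),
    ← sum_powerset_pow_mul_pow_card_inter, SimpleGraph.card_edgeFinset_top_eq_card_choose_two,
    Fintype.card_fin]

theorem sum_erWeight (n : ℕ) (p : ℝ) : ∑ G, erWeight n p G = 1 := by
  simpa using sum_erWeight_mul_pow n p 1 ∅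

section erProb

open Classical

variable {n : ℕ} {p : ℝ}

theorem erProb_eq_sum_erWeight (P : SimpleGraph (Fin n) → Prop) :
    erProb n p P = ∑ G, if P G then erWeight n p G else 0 :=
  rfl

theorem erProb_add_erProb_not (P : SimpleGraph (Fin n) → Prop) :
    erProb n p P + erProb n p (fun G => ¬ P G) = 1 := by
  rw [erProb_eq_sum_erWeight, erProb_eq_sum_erWeight, ← sum_add_distrib, ← sum_erWeight n p]
  exact sum_congr rfl fun G _ => by split_ifs <;> simp

theorem tendsto_erProb_of_tendsto_erProb_not {p : ℕ → ℝ}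
    {P : ∀ n, SimpleGraph (Fin n) → Prop}
    (h : Tendsto (fun n => erProb n (p n) (fun G => ¬ P n G)) atTop (nhds 0)) :
    Tendsto (fun n => erProb n (p n) (P n)) atTop (nhds 1) := by
  have hsum : ∀ n, erProb n (p n) (P n) = 1 - erProb n (p n) (fun G => ¬ P n G) := fun n =>
    eq_sub_of_add_eq (erProb_add_erProb_not (P n))
  simpa [hsum] using h.const_sub 1

variable (hp0 : 0 ≤ p) (hp1 : p ≤ 1)
include hp0 hp1

theorem erProb_nonneg (P : SimpleGraph (Fin n) → Prop) : 0 ≤ erProb n p P := by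
  rw [erProb_eq_sum_erWeight]
  exact sum_nonneg fun G _ => ite_nonneg (erWeight_nonneg hp0 hp1 G) le_rfl

theorem erProb_mono {P Q : SimpleGraph (Fin n) → Prop} (h : ∀ G, P G → Q G) :
    erProb n p P ≤ erProb n p Q := by
  rw [erProb_eq_sum_erWeight, erProb_eq_sum_erWeight]
  refine sum_le_sum fun G _ => ?_
  split_ifs with hP hQ
  · exact le_rfl
  · exact absurd (h G hP) hQ
  · exact erWeight_nonneg hp0 hp1 G
  · exact le_rfl

theorem erProb_or_le (P Q : SimpleGraph (Fin n) → Prop) :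
    erProb n p (fun G => P G ∨ Q G) ≤ erProb n p P + erProb n p Q := by
  rw [erProb_eq_sum_erWeight, erProb_eq_sum_erWeight, erProb_eq_sum_erWeight,
    ← sum_add_distrib]
  refine sum_le_sum fun G _ => ?_
  have := erWeight_nonneg hp0 hp1 G
  split_ifs <;> simp_all

theorem erProb_exists_le {ι : Type*} (I : Finset ι) (Q : ι → SimpleGraph (Fin n) → Prop) :
    erProb n p (fun G => ∃ i ∈ I, Q i G) ≤ ∑ i ∈ I, erProb n p (Q i) := by
  simp only [erProb_eq_sum_erWeight]
  rw [sum_comm]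
  refine sum_le_sum fun G _ => ?_
  have hw := erWeight_nonneg hp0 hp1 G
  split_ifs with h
  · obtain ⟨i, hi, hQ⟩ := h
    calc erWeight n p G = if Q i G then erWeight n p G else 0 := by rw [if_pos hQ]
      _ ≤ ∑ j ∈ I, if Q j G then erWeight n p G else 0 :=
        single_le_sum (f := fun j => if Q j G then erWeight n p G else 0)
          (fun j _ => ite_nonneg hw le_rfl) hi
  · exact sum_nonneg fun j _ => ite_nonneg hw le_rfl

theorem erProb_le_sum_erWeight_mul {P : SimpleGraph (Fin n) → Prop}
    {f : SimpleGraph (Fin n) → ℝ} (hf0 : ∀ G, 0 ≤ f G) (hf : ∀ G, P G → 1 ≤ f G) :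
    erProb n p P ≤ ∑ G, erWeight n p G * f G := by
  refine sum_le_sum fun G _ => ?_
  have hw := erWeight_nonneg hp0 hp1 G
  split_ifs with h
  · exact le_mul_of_one_le_right hw (hf G h)
  · exact mul_nonneg hw (hf0 G)

/-- Chernoff bound: Markov's inequality applied to `e ^ X`. -/
theorem erProb_lt_card_inter_le (C : Finset (Sym2 (Fin n))) (b : ℝ) :
    erProb n p (fun G => b < #(G.edgeFinset ∩ C)) ≤
      Real.exp ((Real.exp 1 - 1) * p * #((⊤ : SimpleGraph (Fin n)).edgeFinset ∩ C) - b) := by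
  have hmarkov : ∀ G : SimpleGraph (Fin n), b < #(G.edgeFinset ∩ C) →
      1 ≤ Real.exp (-b) * Real.exp 1 ^ #(G.edgeFinset ∩ C) := fun G hG => by
    rw [← Real.exp_nat_mul, ← Real.exp_add]
    exact Real.one_le_exp (by linarith)
  calc erProb n p _
      ≤ ∑ G, erWeight n p G * (Real.exp (-b) * Real.exp 1 ^ #(G.edgeFinset ∩ C)) :=
        erProb_le_sum_erWeight_mul hp0 hp1 (fun G => by positivity) hmarkov
    _ = Real.exp (-b) *
          (1 - p + p * Real.exp 1) ^ #((⊤ : SimpleGraph (Fin n)).edgeFinset ∩ C) := by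
        simp_rw [mul_left_comm _ (Real.exp (-b)), ← mul_sum, sum_erWeight_mul_pow]
    _ ≤ Real.exp (-b) *
          Real.exp ((Real.exp 1 - 1) * p) ^ #((⊤ : SimpleGraph (Fin n)).edgeFinset ∩ C) := by
        gcongr
        linarith [Real.add_one_le_exp ((Real.exp 1 - 1) * p)]
    _ = _ := by
        rw [← Real.exp_nat_mul, ← Real.exp_add]
        ring_nf

theorem erProb_lt_card_inter_le_exp_neg {C : Finset (Sym2 (Fin n))} {a b : ℝ}
    (ha : p * #((⊤ : SimpleGraph (Fin n)).edgeFinset ∩ C) ≤ a) (hb : 2 * a ≤ b) :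
    erProb n p (fun G => b < #(G.edgeFinset ∩ C)) ≤ Real.exp (-(a / 4)) := by
  refine (erProb_lt_card_inter_le hp0 hp1 C b).trans (Real.exp_le_exp.2 ?_)
  have he : Real.exp 1 < 2.75 := Real.exp_one_lt_d9.trans (by norm_num)
  have he1 : 0 ≤ Real.exp 1 - 1 := by linarith [Real.add_one_le_exp 1]
  have ha0 : 0 ≤ a := le_trans (by positivity) ha
  nlinarith [mul_le_mul_of_nonneg_left ha he1]

end erProb

noncomputable def pairThreshold (n : ℕ) (p : ℝ) (s : ℕ) : ℝ :=
  max (s * p) (16 * Real.log n)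

section PairBounds

variable {n : ℕ} {p : ℝ} (hp0 : 0 ≤ p) (hp1 : p ≤ 1)
include hp0 hp1

theorem erProb_nablaCount_gt_le {S T : Set (Fin n)} (hST : S.ncard ≤ T.ncard) :
    erProb n p (fun G => 2 * T.ncard * pairThreshold n p S.ncard < nablaCount G S T) ≤
      Real.exp (-(2 * Real.log n)) ^ S.ncard * Real.exp (-(2 * Real.log n)) ^ T.ncard := by
  classical
  set s : ℝ := (S.ncard : ℝ)
  set t : ℝ := (T.ncard : ℝ)
  set M := pairThreshold n p S.ncard
  set C := image₂ Sym2.mk S.toFinset T.toFinset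
  have hL : 0 ≤ Real.log n := Real.log_natCast_nonneg n
  have hst : s ≤ t := Nat.cast_le.2 hST
  have hM : 16 * Real.log n ≤ M := le_max_right _ _
  have hC : (#((⊤ : SimpleGraph (Fin n)).edgeFinset ∩ C) : ℝ) ≤ s * t := by
    simp only [s, t, Set.ncard_eq_toFinset_card']
    exact_mod_cast (card_le_card inter_subset_right).trans (card_image₂_le _ _ _)
  have hpC : p * #((⊤ : SimpleGraph (Fin n)).edgeFinset ∩ C) ≤ t * M := calc
    _ ≤ p * (s * t) := by gcongr
    _ = t * (s * p) := by ring
    _ ≤ t * M := by gcongr; exact le_max_left _ _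
  calc erProb n p _ = erProb n p (fun G => 2 * t * M < #(G.edgeFinset ∩ C)) := by
        simp_rw [nablaCount_eq_card_inter]; rfl
    _ ≤ Real.exp (-(t * M / 4)) :=
        erProb_lt_card_inter_le_exp_neg hp0 hp1 hpC (mul_assoc _ _ _).ge
    _ ≤ _ := by
        rw [← Real.exp_nat_mul, ← Real.exp_nat_mul, ← Real.exp_add, Real.exp_le_exp]
        nlinarith [mul_le_mul_of_nonneg_left hM (Nat.cast_nonneg (α := ℝ) T.ncard),
          mul_le_mul_of_nonneg_right hst hL]

theorem erProb_edgesInside_gt_le (S : Set (Fin n)) :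
    erProb n p (fun G => S.ncard * pairThreshold n p S.ncard < edgesInside G S) ≤
      Real.exp (-(2 * Real.log n)) ^ S.ncard := by
  classical
  set s : ℝ := (S.ncard : ℝ)
  set M := pairThreshold n p S.ncard
  set C := S.toFinset.sym2
  have hL : 0 ≤ Real.log n := Real.log_natCast_nonneg n
  have hM : 16 * Real.log n ≤ M := le_max_right _ _
  have hC : (#((⊤ : SimpleGraph (Fin n)).edgeFinset ∩ C) : ℝ) ≤ s ^ 2 / 2 := calc
    _ ≤ (S.ncard.choose 2 : ℝ) := by exact_mod_cast card_edgeFinset_top_inter_sym2_le S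
    _ ≤ s ^ 2 / 2 := by simpa using Nat.choose_le_pow_div (α := ℝ) 2 S.ncard
  have hpC : p * #((⊤ : SimpleGraph (Fin n)).edgeFinset ∩ C) ≤ s * M / 2 := calc
    _ ≤ p * (s ^ 2 / 2) := by gcongr
    _ = s * (s * p) / 2 := by ring
    _ ≤ s * M / 2 := by gcongr; exact le_max_left _ _
  calc erProb n p _ = erProb n p (fun G => s * M < #(G.edgeFinset ∩ C)) := by
        simp_rw [edgesInside_eq_card_inter]; rfl
    _ ≤ Real.exp (-(s * M / 2 / 4)) :=
        erProb_lt_card_inter_le_exp_neg hp0 hp1 hpC (le_of_eq (by ring))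
    _ ≤ _ := by
        rw [← Real.exp_nat_mul, Real.exp_le_exp]
        nlinarith [mul_le_mul_of_nonneg_left hM (Nat.cast_nonneg (α := ℝ) S.ncard)]

theorem erProb_exists_nablaCount_gt_le :
    erProb n p (fun G => ∃ S T : Set (Fin n), S.Nonempty ∧ T.Nonempty ∧
        S.ncard ≤ T.ncard ∧ 2 * T.ncard * pairThreshold n p S.ncard < nablaCount G S T) ≤
      ((1 + Real.exp (-(2 * Real.log n))) ^ n - 1) ^ 2 := by
  classical
  set q := Real.exp (-(2 * Real.log n))
  set N := univ.erase (∅ : Set (Fin n))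
  set I := (N ×ˢ N).filter fun x => x.1.ncard ≤ x.2.ncard
  calc erProb n p _ ≤ erProb n p (fun G => ∃ x ∈ I,
          2 * x.2.ncard * pairThreshold n p x.1.ncard < nablaCount G x.1 x.2) := by
        refine erProb_mono hp0 hp1 fun G ⟨S, T, hS, hT, hST, h⟩ => ⟨(S, T), ?_, h⟩
        simp [I, N, hS.ne_empty, hT.ne_empty, hST]
    _ ≤ ∑ x ∈ I, q ^ x.1.ncard * q ^ x.2.ncard :=
        (erProb_exists_le hp0 hp1 _ _).trans <| sum_le_sum fun x hx =>
          erProb_nablaCount_gt_le hp0 hp1 (mem_filter.1 hx).2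
    _ ≤ ∑ x ∈ N ×ˢ N, q ^ x.1.ncard * q ^ x.2.ncard :=
        sum_le_sum_of_subset_of_nonneg (filter_subset _ _) fun _ _ _ => by positivity
    _ = (∑ S ∈ N, q ^ S.ncard) * ∑ T ∈ N, q ^ T.ncard := by rw [sum_mul_sum, sum_product]
    _ = _ := by rw [sum_erase_empty_pow_ncard, Fintype.card_fin, sq]

theorem erProb_exists_edgesInside_gt_le :
    erProb n p (fun G => ∃ S : Set (Fin n), S.Nonempty ∧
        S.ncard * pairThreshold n p S.ncard < edgesInside G S) ≤
      (1 + Real.exp (-(2 * Real.log n))) ^ n - 1 := by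
  classical
  calc erProb n p _ ≤ erProb n p (fun G => ∃ S ∈ univ.erase (∅ : Set (Fin n)),
          S.ncard * pairThreshold n p S.ncard < edgesInside G S) :=
        erProb_mono hp0 hp1 fun G ⟨S, hS, h⟩ => ⟨S, by simp [hS.ne_empty], h⟩
    _ ≤ ∑ S ∈ univ.erase (∅ : Set (Fin n)), Real.exp (-(2 * Real.log n)) ^ S.ncard :=
        (erProb_exists_le hp0 hp1 _ _).trans <| sum_le_sum fun S _ =>
          erProb_edgesInside_gt_le hp0 hp1 S
    _ = _ := by rw [sum_erase_empty_pow_ncard, Fintype.card_fin]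

end PairBounds

def HasSparsePairBounds (n : ℕ) (K p : ℝ) (G : SimpleGraph (Fin n)) : Prop :=
  ∀ κ : ℝ, K * Real.log n / p < κ →
    ∀ S T : Set (Fin n), Disjoint S T → S.Nonempty → T.Nonempty →
      (S.ncard : ℝ) ≤ κ → S.ncard ≤ T.ncard →
      (nablaCount G S T : ℝ) ≤ 2 * T.ncard * κ * p ∧
        (edgesInside G S : ℝ) ≤ S.ncard * κ * p

theorem hasSparsePairBounds_of_forall {n : ℕ} {p : ℝ} (hp : 0 < p) {G : SimpleGraph (Fin n)}
    (hnabla : ∀ S T : Set (Fin n), S.Nonempty → T.Nonempty → S.ncard ≤ T.ncard →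
      (nablaCount G S T : ℝ) ≤ 2 * T.ncard * pairThreshold n p S.ncard)
    (hinside : ∀ S : Set (Fin n), S.Nonempty →
      (edgesInside G S : ℝ) ≤ S.ncard * pairThreshold n p S.ncard) :
    HasSparsePairBounds n 16 p G := by
  intro κ hκ S T _ hS hT hSκ hST
  have hM : pairThreshold n p S.ncard ≤ κ * p :=
    max_le (by gcongr) (by rw [div_lt_iff₀ hp] at hκ; exact hκ.le)
  constructor
  · calc (nablaCount G S T : ℝ) ≤ 2 * T.ncard * pairThreshold n p S.ncard :=
          hnabla S T hS hT hST
      _ ≤ 2 * T.ncard * (κ * p) := by gcongr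
      _ = 2 * T.ncard * κ * p := by ring
  · calc (edgesInside G S : ℝ) ≤ S.ncard * pairThreshold n p S.ncard := hinside S hS
      _ ≤ S.ncard * (κ * p) := by gcongr
      _ = S.ncard * κ * p := by ring

theorem erProb_not_hasSparsePairBounds_le {n : ℕ} {p : ℝ} (hp0 : 0 < p) (hp1 : p ≤ 1) :
    erProb n p (fun G => ¬ HasSparsePairBounds n 16 p G) ≤
      ((1 + Real.exp (-(2 * Real.log n))) ^ n - 1) ^ 2 +
        ((1 + Real.exp (-(2 * Real.log n))) ^ n - 1) := by
  refine (erProb_mono hp0.le hp1 fun G hG => ?_).trans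
    ((erProb_or_le hp0.le hp1 _ _).trans (add_le_add
      (erProb_exists_nablaCount_gt_le hp0.le hp1) (erProb_exists_edgesInside_gt_le hp0.le hp1)))
  contrapose! hG
  exact hasSparsePairBounds_of_forall hp0 hG.1 hG.2

/-- **Proposition 3.4 of DeMarco–Kahn.** There is a `K` such that w.h.p., for every
`κ > K p⁻¹ log n` and disjoint nonempty `S, T` with `|S| ≤ min{κ, |T|}`, one has
`|∇(S,T)| ≤ 2|T|κp` and `|G[S]| ≤ |S|κp`. -/
theorem sparse_pair_bound :
    ∃ K : ℝ, ∀ p : ℕ → ℝ, (∀ n : ℕ, 0 < p n ∧ p n < 1) →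
      Tendsto (fun n : ℕ => erProb n (p n) (fun G =>
          ∀ κ : ℝ, K * Real.log n / p n < κ →
            ∀ S T : Set (Fin n), Disjoint S T → S.Nonempty → T.Nonempty →
              (S.ncard : ℝ) ≤ κ → S.ncard ≤ T.ncard →
              (nablaCount G S T : ℝ) ≤ 2 * T.ncard * κ * p n ∧
              (edgesInside G S : ℝ) ≤ S.ncard * κ * p n))
        atTop (nhds 1) := by
  refine ⟨16, fun p hp => tendsto_erProb_of_tendsto_erProb_not
    (P := fun n => HasSparsePairBounds n 16 (p n)) ?_⟩
  have hu := tendsto_one_add_pow_sub_one (fun n => (Real.exp_pos _).le)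
    tendsto_natCast_mul_exp_neg_two_mul_log
  refine squeeze_zero (fun n => erProb_nonneg (hp n).1.le (hp n).2.le _)
    (fun n => erProb_not_hasSparsePairBounds_le (hp n).1 (hp n).2.le) ?_
  simpa using (hu.pow 2).add hu
end

section
/- Let K > 0, let 0 < p ≤ 1, let Q be a finite graph in which every vertex has degree less than K/p, and let τ ∈ [p, K]. Then there is a bipartite subgraph R of Q such that every vertex has degree at most ⌈τ/p⌉ in R and |R| ≥ (τ/(2K))|Q|. -/
open Filter

/-!
Averaging over all 2-colourings of the vertices gives a bipartite `B ≤ Q` with `|Q| ≤ 2|B|`.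
With `D = ⌈τ/p⌉` and `M = ⌊KD/τ⌋`, every degree of `Q` is at most `M` and `τM ≤ KD`, so it
suffices that a bipartite graph of maximum degree `≤ M` has a subgraph of maximum degree `≤ D`
with at least `D/M` of its edges. Padding the biadjacency matrix to one with all line sums `M`
and applying Hall's theorem yields a matching meeting every vertex of degree `M`; removing it
lowers the maximum degree, and induction on `M`, either discarding the matching or keeping it
and asking for one degree less, gives the claim.
-/

open Finset

theorem exists_eq_add_single_one {γ : Type*} [DecidableEq γ] {f : γ → ℕ} {i : γ}
    (hi : f i ≠ 0) : ∃ f' : γ → ℕ, f = f' + Pi.single i 1 := by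
  refine ⟨f - Pi.single i 1, (tsub_add_cancel_of_le fun j => ?_).symm⟩
  rcases eq_or_ne j i with rfl | hj <;> simp [*, Nat.one_le_iff_ne_zero]

theorem exists_nat_matrix_sum_eq {α β : Type*} [Fintype α] [Fintype β] [DecidableEq α]
    [DecidableEq β] (r : α → ℕ) (c : β → ℕ) (h : ∑ x, r x = ∑ y, c y) :
    ∃ E : α → β → ℕ, (∀ x, ∑ y, E x y = r x) ∧ ∀ y, ∑ x, E x y = c y := by
  induction hn : ∑ x, r x generalizing r c with
  | zero =>
    refine ⟨0, fun x => ?_, fun y => ?_⟩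
    · simpa using (sum_eq_zero_iff.mp hn x (mem_univ x)).symm
    · simpa using (sum_eq_zero_iff.mp (h ▸ hn) y (mem_univ y)).symm
  | succ n ih =>
    obtain ⟨x₀, -, hx₀⟩ := exists_ne_zero_of_sum_ne_zero (s := univ) (f := r) (by omega)
    obtain ⟨y₀, -, hy₀⟩ := exists_ne_zero_of_sum_ne_zero (s := univ) (f := c) (by omega)
    obtain ⟨r, rfl⟩ := exists_eq_add_single_one hx₀
    obtain ⟨c, rfl⟩ := exists_eq_add_single_one hy₀
    simp only [Pi.add_apply, sum_add_distrib, sum_pi_single', mem_univ, if_true] at hn h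
    obtain ⟨E, hErow, hEcol⟩ := ih r c (by omega) (by omega)
    refine ⟨fun x y => E x y + (Pi.single x₀ 1 : α → ℕ) x * (Pi.single y₀ 1 : β → ℕ) y,
      fun x => ?_, fun y => ?_⟩
    · simp [sum_add_distrib, ← mul_sum, hErow]
    · simp [sum_add_distrib, ← sum_mul, hEcol]

theorem exists_injective_forall_ne_zero {α β : Type*} [Fintype α] [Fintype β] [DecidableEq β]
    (N : α → β → ℕ) {k : ℕ} (hk : 0 < k) (hrow : ∀ x, k ≤ ∑ y, N x y)
    (hcol : ∀ y, ∑ x, N x y ≤ k) :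
    ∃ f : α → β, f.Injective ∧ ∀ x, N x (f x) ≠ 0 := by
  let support (x : α) : Finset β := {y | N x y ≠ 0}
  suffices hall : ∀ s : Finset α, #s ≤ #(s.biUnion support) by
    simpa [support] using (all_card_le_biUnion_card_iff_exists_injective support).mp hall
  intro s
  refine Nat.le_of_mul_le_mul_left ?_ hk
  calc k * #s ≤ ∑ x ∈ s, ∑ y, N x y := by
        rw [mul_comm, ← smul_eq_mul, ← sum_const]; exact sum_le_sum fun x _ => hrow x
    _ = ∑ x ∈ s, ∑ y ∈ s.biUnion support, N x y := by
        refine sum_congr rfl fun x hx => (sum_subset (subset_univ _) fun y _ hy => ?_).symm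
        by_contra hne
        exact hy (mem_biUnion.mpr ⟨x, hx, by simpa [support] using hne⟩)
    _ = ∑ y ∈ s.biUnion support, ∑ x ∈ s, N x y := sum_comm
    _ ≤ ∑ y ∈ s.biUnion support, k :=
        sum_le_sum fun y _ => (sum_le_sum_of_subset (subset_univ s)).trans (hcol y)
    _ = k * #(s.biUnion support) := by rw [sum_const, smul_eq_mul, mul_comm]

theorem exists_perm_forall_ne_zero {α : Type*} [Fintype α] [DecidableEq α] (A : α → α → ℕ)
    {M : ℕ} (hM : 0 < M) (hrow : ∀ x, ∑ y, A x y ≤ M) (hcol : ∀ y, ∑ x, A x y ≤ M) :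
    ∃ σ : Equiv.Perm α, (∀ x, ∑ y, A x y = M → A x (σ x) ≠ 0) ∧
      ∀ y, ∑ x, A x y = M → A (σ.symm y) y ≠ 0 := by
  -- pad `A` to a matrix with all line sums `M`, then apply Hall
  have hdef : ∑ x, (M - ∑ y, A x y) = ∑ y, (M - ∑ x, A x y) := by
    rw [sum_tsub_distrib _ fun x _ => hrow x, sum_tsub_distrib _ fun y _ => hcol y, sum_comm]
  obtain ⟨E, hErow, hEcol⟩ := exists_nat_matrix_sum_eq _ _ hdef
  have hrow' x : ∑ y, (A x y + E x y) = M := by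
    rw [sum_add_distrib, hErow]; have := hrow x; omega
  have hcol' y : ∑ x, (A x y + E x y) = M := by
    rw [sum_add_distrib, hEcol]; have := hcol y; omega
  obtain ⟨f, hf, hfN⟩ := exists_injective_forall_ne_zero (fun x y => A x y + E x y) hM
    (fun x => (hrow' x).ge) (fun y => (hcol' y).le)
  let σ := Equiv.ofBijective f (Finite.injective_iff_bijective.mp hf)
  refine ⟨σ, fun x hx => ?_, fun y hy => ?_⟩
  · have hE : ∑ y, E x y = 0 := by rw [hErow, hx, Nat.sub_self]
    simpa [σ, sum_eq_zero_iff.mp hE (f x) (mem_univ _)] using hfN x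
  · have hE : ∑ x, E x y = 0 := by rw [hEcol, hy, Nat.sub_self]
    have hfy : f (σ.symm y) = y := σ.apply_symm_apply y
    simpa [hfy, sum_eq_zero_iff.mp hE (σ.symm y) (mem_univ _)] using hfN (σ.symm y)

theorem two_mul_card_filter_apply_ne {α : Type*} [Fintype α] [DecidableEq α] {a b : α}
    (hab : a ≠ b) : 2 * #{g : α → Bool | g a ≠ g b} = Fintype.card (α → Bool) := by
  let flip (g : α → Bool) := Function.update g a (!g a)
  have hflip g : flip (flip g) = g := by ext; simp [flip]
  have hcard : #{g : α → Bool | g a ≠ g b} = #{g : α → Bool | ¬ g a ≠ g b} :=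
    card_nbij' flip flip (fun g => by simp [flip, Function.update_of_ne hab.symm, Bool.eq_not])
      (fun g => by simp [flip, Function.update_of_ne hab.symm, Bool.eq_not])
      (fun g _ => hflip g) (fun g _ => hflip g)
  rw [two_mul]
  nth_rw 2 [hcard]
  rw [card_filter_add_card_filter_not, card_univ]

namespace SimpleGraph

variable {V : Type*}

theorem sum_ite_adj_eq_ncard_neighborSet [Fintype V] (G : SimpleGraph V) [DecidableRel G.Adj]
    (x : V) :
    ∑ y, (if G.Adj x y then 1 else 0) = (G.neighborSet x).ncard := by
  rw [sum_boole, Set.ncard_eq_toFinset_card']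
  congr 2
  ext y
  simp

theorem exists_matching_adj_of_ncard_neighborSet_eq [Fintype V] {B : SimpleGraph V}
    (c : B.Coloring Bool) {M : ℕ} (hM : 0 < M) (hdeg : ∀ v, (B.neighborSet v).ncard ≤ M) :
    ∃ F ≤ B, (∀ v, (F.neighborSet v).ncard ≤ 1) ∧
      ∀ v, (B.neighborSet v).ncard = M → ∃ w, F.Adj v w := by
  classical
  let A x y : ℕ := if c x = true ∧ B.Adj x y then 1 else 0
  have hA x y : A x y ≠ 0 ↔ c x = true ∧ B.Adj x y := by simp [A]
  have hrow_le x : ∑ y, A x y ≤ (B.neighborSet x).ncard := by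
    rw [← sum_ite_adj_eq_ncard_neighborSet]
    exact sum_le_sum fun y _ => by by_cases hx : c x = true <;> simp [A, hx]
  have hrow_eq x (hx : c x = true) : ∑ y, A x y = (B.neighborSet x).ncard := by
    rw [← sum_ite_adj_eq_ncard_neighborSet]
    simp [A, hx]
  have hcol_le y : ∑ x, A x y ≤ (B.neighborSet y).ncard := by
    rw [← sum_ite_adj_eq_ncard_neighborSet]
    exact sum_le_sum fun x _ => by by_cases hx : c x = true <;> simp [A, hx, B.adj_comm y x]
  have hcol_eq y (hy : c y = false) : ∑ x, A x y = (B.neighborSet y).ncard := by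
    rw [← sum_ite_adj_eq_ncard_neighborSet]
    refine sum_congr rfl fun x _ => ?_
    by_cases hxy : B.Adj x y
    · have := c.valid hxy
      simp_all [A, B.adj_comm y x]
    · simp [A, hxy, B.adj_comm y x]
  obtain ⟨σ, hσrow, hσcol⟩ := exists_perm_forall_ne_zero A hM
    (fun x => (hrow_le x).trans (hdeg x)) (fun y => (hcol_le y).trans (hdeg y))
  refine ⟨fromRel fun x y => A x y ≠ 0 ∧ σ x = y, fun x y h => ?_, fun v => ?_, fun v hv => ?_⟩
  · obtain ⟨-, ⟨h, -⟩ | ⟨h, -⟩⟩ := h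
    exacts [((hA x y).mp h).2, ((hA y x).mp h).2.symm]
  · -- a vertex on the `true` side is matched to its image, one on the `false` side to its preimage
    let u := if c v = true then σ v else σ.symm v
    refine (Set.ncard_le_ncard (t := {u}) fun w hw => ?_).trans (Set.ncard_singleton u).le
    obtain ⟨-, ⟨h, hvw⟩ | ⟨h, hwv⟩⟩ := hw
    · simp [u, ((hA v w).mp h).1, hvw]
    · obtain ⟨hw, hwv'⟩ := (hA w v).mp h
      have hv : c v = false := by simpa [hw] using (c.valid hwv').symm
      subst hwv
      simp [u, hv]
  · cases hcv : c v
    · have hA' := hσcol v ((hcol_eq v hcv).trans hv)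
      exact ⟨σ.symm v, ((hA _ v).mp hA').2.ne.symm, Or.inr ⟨hA', σ.apply_symm_apply v⟩⟩
    · have hA' := hσrow v ((hrow_eq v hcv).trans hv)
      exact ⟨σ v, ((hA v _).mp hA').2.ne, Or.inl ⟨hA', rfl⟩⟩

theorem edgeCount_sup_of_disjoint [Finite V] {G H : SimpleGraph V} (h : Disjoint G H) :
    edgeCount (G ⊔ H) = edgeCount G + edgeCount H := by
  rw [edgeCount, edgeSet_sup, Set.ncard_union_eq (disjoint_edgeSet.mpr h)]
  rfl

theorem edgeCount_sdiff_add_edgeCount [Finite V] {G H : SimpleGraph V} (h : H ≤ G) :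
    edgeCount (G \ H) + edgeCount H = edgeCount G := by
  rw [← edgeCount_sup_of_disjoint disjoint_sdiff_self_left, sdiff_sup_cancel h]

theorem ncard_neighborSet_sdiff_le [Finite V] {G H : SimpleGraph V} {M : ℕ}
    (hdeg : ∀ v, (G.neighborSet v).ncard ≤ M + 1)
    (hH : ∀ v, (G.neighborSet v).ncard = M + 1 → ∃ w, H.Adj v w) (hHG : H ≤ G) (v : V) :
    ((G \ H).neighborSet v).ncard ≤ M := by
  rw [neighborSet_sdiff]
  rcases (hdeg v).lt_or_eq with hv | hv
  · exact (Set.ncard_le_ncard Set.sdiff_subset).trans (Nat.le_of_lt_succ hv)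
  · obtain ⟨w, hw⟩ := hH v hv
    calc (G.neighborSet v \ H.neighborSet v).ncard ≤ (G.neighborSet v \ {w}).ncard :=
          Set.ncard_le_ncard (Set.sdiff_subset_sdiff_right (by simpa using hw))
      _ = M := by
          rw [Set.ncard_sdiff_singleton_of_mem (show w ∈ G.neighborSet v from hHG hw), hv,
            Nat.add_sub_cancel]

theorem exists_le_ncard_neighborSet_le_mul_edgeCount_le [Fintype V] {B : SimpleGraph V}
    (c : B.Coloring Bool) {M D : ℕ} (hDM : D ≤ M) (hdeg : ∀ v, (B.neighborSet v).ncard ≤ M) :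
    ∃ R ≤ B, (∀ v, (R.neighborSet v).ncard ≤ D) ∧ D * edgeCount B ≤ M * edgeCount R := by
  classical
  induction M generalizing B D with
  | zero => exact ⟨B, le_rfl, fun v => by simpa [Nat.le_zero.mp hDM] using hdeg v,
      by simp [Nat.le_zero.mp hDM]⟩
  | succ M ih =>
    rcases hDM.lt_or_eq with hDM | rfl
    swap
    · exact ⟨B, le_rfl, hdeg, le_rfl⟩
    obtain _ | D := D
    · exact ⟨⊥, bot_le, fun v => by simp, by simp⟩
    obtain ⟨F, hFB, hF, hFcover⟩ :=
      exists_matching_adj_of_ncard_neighborSet_eq c (Nat.succ_pos M) hdeg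
    have hdeg' := ncard_neighborSet_sdiff_le hdeg hFcover hFB
    let c' : (B \ F).Coloring Bool := c.comp (Hom.ofLE sdiff_le)
    obtain ⟨R₁, hR₁, hR₁deg, hR₁count⟩ := ih c' (D := D + 1) (by omega) hdeg'
    obtain ⟨R₂, hR₂, hR₂deg, hR₂count⟩ := ih c' (by omega : D ≤ M) hdeg'
    have hcount := edgeCount_sdiff_add_edgeCount hFB
    have hR₂F : edgeCount (R₂ ⊔ F) = edgeCount R₂ + edgeCount F :=
      edgeCount_sup_of_disjoint (disjoint_sdiff_self_left.mono_left hR₂)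
    -- the average of `|R₁|` and `|R₂| + |F|` with weights `M - D` and `D + 1` is at least
    -- `(D + 1) |B| / (M + 1)`
    have key : (D + 1) * edgeCount B ≤ (M + 1) * edgeCount R₁ ∨
        (D + 1) * edgeCount B ≤ (M + 1) * (edgeCount R₂ + edgeCount F) := by
      rw [← hcount]
      by_contra! h
      obtain ⟨k, rfl⟩ := Nat.exists_eq_add_of_le (by omega : D + 1 ≤ M)
      have e₁ := Nat.mul_le_mul_left ((D + 1 + k + 1) * (k + 1)) hR₁count
      have e₂ := Nat.mul_le_mul_left ((D + 1 + k + 1) * (D + 1)) hR₂count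
      have e₃ := Nat.mul_le_mul_left ((D + 1 + k) * (k + 1)) h.1
      have e₄ := Nat.mul_le_mul_left ((D + 1 + k) * (D + 1)) h.2
      nlinarith
    rcases key with key | key
    · exact ⟨R₁, hR₁.trans sdiff_le, hR₁deg, key⟩
    · refine ⟨R₂ ⊔ F, sup_le (hR₂.trans sdiff_le) hFB, fun v => ?_, hR₂F ▸ key⟩
      exact (Set.ncard_union_le _ _).trans (add_le_add (hR₂deg v) (hF v))

theorem edgeCount_eq_sum_ite [Fintype V] (H : SimpleGraph V) [DecidablePred (· ∈ H.edgeSet)] :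
    edgeCount H = ∑ e : Sym2 V, if e ∈ H.edgeSet then 1 else 0 := by
  rw [edgeCount, Set.ncard_eq_toFinset_card', sum_boole]
  simp

theorem exists_edgeCount_le_two_mul_edgeCount_cut [Fintype V] (G : SimpleGraph V) :
    ∃ g : V → Bool, edgeCount G ≤ 2 * edgeCount (G ⊓ (⊤ : SimpleGraph Bool).comap g) := by
  classical
  have hedge (e : Sym2 V) : 2 * ∑ g : V → Bool,
      (if e ∈ (G ⊓ (⊤ : SimpleGraph Bool).comap g).edgeSet then 1 else 0) =
      Fintype.card (V → Bool) * if e ∈ G.edgeSet then 1 else 0 := by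
    induction e using Sym2.ind with | _ a b => ?_
    by_cases hab : G.Adj a b
    · simp only [mem_edgeSet, inf_adj, comap_adj, top_adj, hab, true_and, if_true, mul_one,
        ← card_filter]
      exact two_mul_card_filter_apply_ne hab.ne
    · simp [hab]
  have htotal : ∑ _g : V → Bool, edgeCount G =
      ∑ g : V → Bool, 2 * edgeCount (G ⊓ (⊤ : SimpleGraph Bool).comap g) :=
    calc ∑ _g : V → Bool, edgeCount G
        = Fintype.card (V → Bool) * ∑ e : Sym2 V, if e ∈ G.edgeSet then 1 else 0 := by
          rw [sum_const, card_univ, smul_eq_mul, edgeCount_eq_sum_ite]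
      _ = ∑ e : Sym2 V, 2 * ∑ g : V → Bool,
            if e ∈ (G ⊓ (⊤ : SimpleGraph Bool).comap g).edgeSet then 1 else 0 := by
          simp_rw [hedge, mul_sum]
      _ = _ := by
          simp_rw [edgeCount_eq_sum_ite, mul_sum]
          exact sum_comm
  obtain ⟨g, -, hg⟩ := exists_le_of_sum_le univ_nonempty htotal.le
  exact ⟨g, hg⟩

theorem exists_colorable_two_le_ncard_neighborSet_le [Fintype V] (Q : SimpleGraph V) {M D : ℕ}
    (hDM : D ≤ M) (hdeg : ∀ v, (Q.neighborSet v).ncard ≤ M) :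
    ∃ R ≤ Q, R.Colorable 2 ∧ (∀ v, (R.neighborSet v).ncard ≤ D) ∧
      D * edgeCount Q ≤ 2 * (M * edgeCount R) := by
  obtain ⟨g, hg⟩ := Q.exists_edgeCount_le_two_mul_edgeCount_cut
  let c : (Q ⊓ (⊤ : SimpleGraph Bool).comap g).Coloring Bool := Coloring.mk g fun h => h.2
  obtain ⟨R, hR, hRdeg, hRcount⟩ := exists_le_ncard_neighborSet_le_mul_edgeCount_le c hDM
    fun v => (Set.ncard_le_ncard fun w hw => hw.1).trans (hdeg v)
  refine ⟨R, hR.trans inf_le_left, c.colorable.mono_left hR, hRdeg, ?_⟩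
  calc D * edgeCount Q ≤ 2 * (D * edgeCount (Q ⊓ (⊤ : SimpleGraph Bool).comap g)) := by
        rw [mul_left_comm]; exact Nat.mul_le_mul_left D hg
    _ ≤ 2 * (M * edgeCount R) := Nat.mul_le_mul_left 2 hRcount

end SimpleGraph

theorem exists_bipartite_bounded_degree_subgraph_general {V : Type*} [Fintype V]
    (K p τ : ℝ) (hK : 0 < K) (hp0 : 0 < p)
    (hτp : p ≤ τ) (hτK : τ ≤ K)
    (Q : SimpleGraph V) (hdeg : ∀ v : V, ((Q.neighborSet v).ncard : ℝ) < K / p) :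
    ∃ R : SimpleGraph V, R ≤ Q ∧ R.Colorable 2 ∧
      (∀ v : V, (R.neighborSet v).ncard ≤ ⌈τ / p⌉₊) ∧
      τ / (2 * K) * (edgeCount Q : ℝ) ≤ (edgeCount R : ℝ) := by
  have hτ : 0 < τ := hp0.trans_le hτp
  set D := ⌈τ / p⌉₊
  have hD : (0 : ℝ) < D := by exact_mod_cast Nat.ceil_pos.mpr (div_pos hτ hp0)
  set M := ⌊K * D / τ⌋₊
  have hMK : τ * M ≤ K * D := by
    have := Nat.floor_le (div_nonneg (mul_nonneg hK.le hD.le) hτ.le)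
    rwa [le_div_iff₀ hτ, mul_comm] at this
  have hDM : D ≤ M := Nat.le_floor <| by rw [le_div_iff₀ hτ]; nlinarith
  have hQdeg v : (Q.neighborSet v).ncard ≤ M := Nat.le_floor <| by
    rw [le_div_iff₀ hτ]
    calc (Q.neighborSet v).ncard * τ ≤ K / p * τ := by gcongr; exact (hdeg v).le
      _ = K * (τ / p) := by ring
      _ ≤ K * D := by gcongr; exact Nat.le_ceil _
  obtain ⟨R, hR, hRcol, hRdeg, hRcount⟩ := Q.exists_colorable_two_le_ncard_neighborSet_le hDM hQdeg
  refine ⟨R, hR, hRcol, hRdeg, ?_⟩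
  have hQR : (D : ℝ) * edgeCount Q ≤ 2 * (M * edgeCount R) := by exact_mod_cast hRcount
  rw [div_mul_eq_mul_div, div_le_iff₀ (by positivity)]
  nlinarith [mul_le_mul_of_nonneg_left hQR hτ.le,
    mul_le_mul_of_nonneg_right hMK (Nat.cast_nonneg (α := ℝ) (edgeCount R))]

/-- A graph `Q` with all degrees less than `K/p` contains, for any `τ ∈ [p, K]`, a
bipartite subgraph `R` with all degrees at most `⌈τ/p⌉` and `|R| ≥ (τ/(2K))|Q|`. -/
theorem exists_bipartite_bounded_degree_subgraph {V : Type*} [Fintype V]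
    (K p τ : ℝ) (hK : 0 < K) (hp0 : 0 < p) (hp1 : p ≤ 1)
    (hτp : p ≤ τ) (hτK : τ ≤ K)
    (Q : SimpleGraph V) (hdeg : ∀ v : V, ((Q.neighborSet v).ncard : ℝ) < K / p) :
    ∃ R : SimpleGraph V, R ≤ Q ∧ R.Colorable 2 ∧
      (∀ v : V, (R.neighborSet v).ncard ≤ ⌈τ / p⌉₊) ∧
      τ / (2 * K) * (edgeCount Q : ℝ) ≤ (edgeCount R : ℝ) :=
  exists_bipartite_bounded_degree_subgraph_general K p τ hK hp0 hτp hτK Q hdeg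
end

section
/- Let G be a graph on vertex set V, let (A,B) be a partition of V, and let F be a triangle-free subgraph of G with no edge inside B. Set I = F[A] (edges of F inside A), J = F[A,B] (edges of F between A and B), and L = G[A,B] ∖ J (edges of G between A and B not in F). Then Σ_{x∈A} |∇_G(N_I(x), N_L(x))| ≥ Σ_{x∈A} |∇_G(N_I(x), N_J(x))|, where for disjoint vertex sets S,T, ∇_G(S,T) denotes the set of edges of G joining S and T, and N_I(x), N_J(x), N_L(x) denote the sets of neighbors of x via edges of I, J, L respectively. -/
open Filter

open Classical in
lemma nabla_eq_card {V : Type*} [Fintype V] (G : SimpleGraph V) (S T : Set V)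
    (hd : Disjoint S T) :
    nablaCount G S T =
      (Finset.univ.filter (fun p : V × V => p.1 ∈ S ∧ p.2 ∈ T ∧ G.Adj p.1 p.2)).card := by
  classical
  set P : Set (V × V) := {p | p.1 ∈ S ∧ p.2 ∈ T ∧ G.Adj p.1 p.2}
  have himg : {e ∈ G.edgeSet | ∃ a ∈ S, ∃ b ∈ T, e = s(a, b)} =
      (fun p : V × V => s(p.1, p.2)) '' P := by
    ext e
    constructor
    · rintro ⟨he, a, ha, b, hb, rfl⟩
      exact ⟨(a, b), ⟨ha, hb, he⟩, rfl⟩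
    · rintro ⟨⟨a, b⟩, ⟨ha, hb, hab⟩, rfl⟩
      exact ⟨hab, a, ha, b, hb, rfl⟩
  have hinj : Set.InjOn (fun p : V × V => s(p.1, p.2)) P := by
    rintro ⟨a, b⟩ ⟨ha, hb, -⟩ ⟨a', b'⟩ ⟨ha', hb', -⟩ h
    simp only [Sym2.eq_iff] at h
    rcases h with ⟨rfl, rfl⟩ | ⟨h1, h2⟩
    · rfl
    · subst h1; subst h2
      exact (Set.disjoint_left.mp hd ha hb').elim
  rw [nablaCount, himg, Set.ncard_image_of_injOn hinj]
  rw [show P = ↑(Finset.univ.filter (fun p : V × V => p.1 ∈ S ∧ p.2 ∈ T ∧ G.Adj p.1 p.2)) by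
    ext p; simp [P]]
  exact Set.ncard_coe_finset _


/-- **Inequality (4.2) of DeMarco–Kahn.** If `F ⊆ G` is triangle-free with no edges
inside `B = Aᶜ`, then `∑_{x∈A} |∇(N_I(x), N_L(x))| ≥ ∑_{x∈A} |∇(N_I(x), N_J(x))|`,
where `I = F[A]`, `J = F[A,B]` and `L = G[A,B] ∖ J`. -/
theorem triangle_free_nabla_sum {V : Type*} [Fintype V] [DecidableEq V]
    (G F : SimpleGraph V) (A : Finset V)
    (hFG : F ≤ G) (htri : F.CliqueFree 3)
    (hB : ∀ x y : V, F.Adj x y → x ∈ A ∨ y ∈ A) :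
    ∑ x ∈ A, nablaCount G (F.neighborSet x ∩ ↑A) (F.neighborSet x ∩ (↑A : Set V)ᶜ) ≤
      ∑ x ∈ A, nablaCount G (F.neighborSet x ∩ ↑A)
        ((G.neighborSet x ∩ (↑A : Set V)ᶜ) \ F.neighborSet x) := by
  classical
  set f : V → Finset (V × V) := fun x => Finset.univ.filter
    (fun p : V × V => p.1 ∈ F.neighborSet x ∩ ↑A ∧
      p.2 ∈ F.neighborSet x ∩ (↑A : Set V)ᶜ ∧ G.Adj p.1 p.2) with hf
  set g : V → Finset (V × V) := fun x => Finset.univ.filter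
    (fun p : V × V => p.1 ∈ F.neighborSet x ∩ ↑A ∧
      p.2 ∈ (G.neighborSet x ∩ (↑A : Set V)ᶜ) \ F.neighborSet x ∧ G.Adj p.1 p.2) with hg
  have hL : ∀ x ∈ A, nablaCount G (F.neighborSet x ∩ ↑A) (F.neighborSet x ∩ (↑A : Set V)ᶜ)
      = (f x).card := by
    intro x _
    refine (nabla_eq_card G _ _ (Set.disjoint_left.mpr ?_)).trans (by congr 1; ext p; simp [hf])
    intro a ha ha'; exact ha'.2 ha.2
  have hR : ∀ x ∈ A, nablaCount G (F.neighborSet x ∩ ↑A)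
      ((G.neighborSet x ∩ (↑A : Set V)ᶜ) \ F.neighborSet x) = (g x).card := by
    intro x _
    refine (nabla_eq_card G _ _ (Set.disjoint_left.mpr ?_)).trans (by congr 1; ext p; simp [hg])
    intro a ha ha'; exact ha'.1.2 ha.2
  rw [Finset.sum_congr rfl hL, Finset.sum_congr rfl hR, ← Finset.card_sigma,
    ← Finset.card_sigma]
  apply Finset.card_le_card_of_injOn
    (fun q => ⟨q.2.1, (q.1, q.2.2)⟩)
  · rintro ⟨x, a, b⟩ hq
    simp only [Finset.mem_sigma, hf, Finset.mem_filter, Finset.mem_univ, true_and,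
      Set.mem_inter_iff, Set.mem_compl_iff, SimpleGraph.mem_neighborSet,
      Finset.mem_coe] at hq
    obtain ⟨hxA, ⟨hxa, haA⟩, ⟨hxb, hbA⟩, hab⟩ := hq
    have hnab : ¬ F.Adj a b := fun h =>
      htri {x, a, b} (SimpleGraph.is3Clique_triple_iff.mpr ⟨hxa, hxb, h⟩)
    simp only [Finset.mem_sigma, hg, Finset.mem_filter, Finset.mem_univ, true_and,
      Set.mem_inter_iff, Set.mem_compl_iff, Set.mem_diff, SimpleGraph.mem_neighborSet,
      Finset.mem_coe]
    exact ⟨haA, ⟨hxa.symm, hxA⟩, ⟨⟨hab, hbA⟩, hnab⟩, hFG hxb⟩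
  · rintro ⟨x, a, b⟩ - ⟨x', a', b'⟩ - h
    simp only [Sigma.mk.inj_iff, heq_eq_eq, Prod.mk.injEq] at h
    obtain ⟨rfl, rfl, rfl⟩ := h
    rfl
end
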